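/- Let (m_i)_{i≥1} be an infinite sequence of pairwise coprime natural numbers ≥ 2, and for each i let π_i be a cyclic permutation of length m_i on Z_{m_i}. For arbitrary r_i, s_i ∈ Z_{m_i}, let A = {n ∈ ℕ : π_i^n(r_i) = s_i for all i ≥ 1}. Then A is Buck measurable and μ(A) = 0. -/

import Mathlib

open scoped BigOperators

/-- Buck's measure density of a set of natural numbers. -/
noncomputable def buckDensity (S : Set ℕ) : ℝ :=
  sInf {x : ℝ | ∃ (k : ℕ) (r D : Fin k → ℕ), (∀ j, 0 < D j) ∧
    (S ⊆ ⋃ j, {n : ℕ | n % D j = r j % D j}) ∧ x = ∑ j, (1 : ℝ) / (D j : ℝ)}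

/-- A set is Buck measurable if its density and its complement's density sum to 1. -/
def BuckMeasurable (S : Set ℕ) : Prop :=
  buckDensity S + buckDensity Sᶜ = 1

/-!
Since `π_i` is a single cycle of length `m_i`, the point `r_i` has minimal period `m_i`, so the
times `n` with `π_i^n (r_i) = s_i` form one residue class mod `m_i`. Hence `A` lies in residue
classes of arbitrarily large modulus (pairwise coprime `m_i ≥ 2` are distinct), which gives
`μ*(A) = 0`. Adjoining such a class to any cover of `ℕ \ A` covers `ℕ`, and a cover of `ℕ` by
classes mod `D_j` has weight `∑ 1 / D_j ≥ 1` (count in `[0, ∏ D_j)`), so `μ*(ℕ \ A) = 1`.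
-/

open Finset Function

section BuckDensity

-- `buckDensity S` is by definition `sInf (buckCoverWeights S)`.
def buckCoverWeights (S : Set ℕ) : Set ℝ :=
  {x : ℝ | ∃ (k : ℕ) (r D : Fin k → ℕ), (∀ j, 0 < D j) ∧
    (S ⊆ ⋃ j, {n : ℕ | n % D j = r j % D j}) ∧ x = ∑ j, (1 : ℝ) / (D j : ℝ)}

variable {S : Set ℕ} {D c : ℕ}

lemma buckCoverWeights_subset_Ici (S : Set ℕ) : buckCoverWeights S ⊆ Set.Ici 0 := by
  rintro _ ⟨k, r, D, -, -, rfl⟩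
  exact Set.mem_Ici.2 (sum_nonneg fun j _ => by positivity)

lemma buckDensity_nonneg (S : Set ℕ) : 0 ≤ buckDensity S :=
  Real.sInf_nonneg fun _ hx => buckCoverWeights_subset_Ici S hx

lemma one_div_mem_buckCoverWeights (hD : 0 < D) (hS : S ⊆ {n | n % D = c % D}) :
    1 / (D : ℝ) ∈ buckCoverWeights S :=
  ⟨1, fun _ => c, fun _ => D, fun _ => hD, fun _ hn => Set.mem_iUnion.2 ⟨0, hS hn⟩, by simp⟩

lemma one_mem_buckCoverWeights (S : Set ℕ) : 1 ∈ buckCoverWeights S := by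
  simpa using one_div_mem_buckCoverWeights (S := S) (c := 0) one_pos fun n _ => Nat.mod_one n

lemma buckDensity_le_one_div (hD : 0 < D) (hS : S ⊆ {n | n % D = c % D}) :
    buckDensity S ≤ 1 / D :=
  csInf_le ⟨0, buckCoverWeights_subset_Ici S⟩ (one_div_mem_buckCoverWeights hD hS)

lemma buckDensity_le_one (S : Set ℕ) : buckDensity S ≤ 1 :=
  csInf_le ⟨0, buckCoverWeights_subset_Ici S⟩ (one_mem_buckCoverWeights S)

theorem one_le_sum_one_div_of_cover {k : ℕ} (r D : Fin k → ℕ) (hD : ∀ j, 0 < D j)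
    (hcov : ∀ n, ∃ j, n % D j = r j % D j) : 1 ≤ ∑ j, (1 : ℝ) / D j := by
  set N := ∏ j, D j
  have hN : 0 < N := prod_pos fun j _ => hD j
  have hdvd : ∀ j, D j ∣ N := fun j => dvd_prod_of_mem _ (mem_univ j)
  -- count the points of `[0, N)`: the class of `r j` contains exactly `N / D j` of them
  have hcount : ∀ j, #{n ∈ range N | n ≡ r j [MOD D j]} = N / D j := fun j => by
    simp [← Nat.count_eq_card_filter_range, Nat.count_modEq_card _ (hD j),
      Nat.mod_eq_zero_of_dvd (hdvd j)]
  have hle : N ≤ ∑ j, N / D j := calc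
    N = #(range N) := (card_range N).symm
    _ ≤ #(univ.biUnion fun j => {n ∈ range N | n ≡ r j [MOD D j]}) :=
      card_le_card fun n hn => by
        obtain ⟨j, hj⟩ := hcov n
        exact mem_biUnion.2 ⟨j, mem_univ j, mem_filter.2 ⟨hn, hj⟩⟩
    _ ≤ ∑ j, #{n ∈ range N | n ≡ r j [MOD D j]} := card_biUnion_le
    _ = ∑ j, N / D j := sum_congr rfl fun j _ => hcount j
  have hNle : (N : ℝ) ≤ N * ∑ j, (1 : ℝ) / D j := calc
    (N : ℝ) ≤ ∑ j, ((N / D j : ℕ) : ℝ) := by exact_mod_cast hle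
    _ = N * ∑ j, (1 : ℝ) / D j := by
        rw [mul_sum]
        refine sum_congr rfl fun j _ => ?_
        rw [Nat.cast_div (hdvd j) (by exact_mod_cast (hD j).ne')]
        ring
  exact le_of_mul_le_mul_left (by simpa using hNle) (by exact_mod_cast hN)

lemma one_sub_one_div_le_buckDensity_compl (hD : 0 < D) (hS : S ⊆ {n | n % D = c % D}) :
    1 - 1 / (D : ℝ) ≤ buckDensity Sᶜ := by
  refine le_csInf ⟨1, one_mem_buckCoverWeights Sᶜ⟩ ?_
  rintro _ ⟨k, r, E, hE, hcov, rfl⟩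
  let r' : Fin (k + 1) → ℕ := Fin.snoc r c
  let E' : Fin (k + 1) → ℕ := Fin.snoc E D
  have hcov' : ∀ n, ∃ j, n % E' j = r' j % E' j := fun n => by
    by_cases hn : n ∈ S
    · exact ⟨Fin.last k, by simpa [r', E'] using hS hn⟩
    · obtain ⟨j, hj⟩ := Set.mem_iUnion.1 (hcov hn)
      exact ⟨j.castSucc, by simpa [r', E'] using hj⟩
  have hE' : ∀ j, 0 < E' j := Fin.lastCases (by simpa [E'] using hD) (by simpa [E'] using hE)
  have := one_le_sum_one_div_of_cover r' E' hE' hcov'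
  rw [Fin.sum_univ_castSucc] at this
  simp only [E', Fin.snoc_castSucc, Fin.snoc_last] at this
  linarith

theorem buckDensity_eq_zero_and_buckMeasurable_of_subset_modEq
    (hS : ∀ K : ℕ, ∃ D > K, ∃ c, S ⊆ {n | n % D = c % D}) :
    buckDensity S = 0 ∧ BuckMeasurable S := by
  have small : ∀ ε > 0, buckDensity S ≤ ε ∧ 1 - ε ≤ buckDensity Sᶜ := fun ε hε => by
    obtain ⟨K, hK⟩ := exists_nat_one_div_lt hε
    obtain ⟨D, hDK, c, hSD⟩ := hS K
    have hD : 1 / (D : ℝ) ≤ 1 / (K + 1) :=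
      one_div_le_one_div_of_le (by positivity) (by exact_mod_cast hDK)
    exact ⟨(buckDensity_le_one_div (by omega) hSD).trans (by linarith),
      by linarith [one_sub_one_div_le_buckDensity_compl (by omega) hSD]⟩
  have h0 : buckDensity S = 0 := le_antisymm
    (le_of_forall_pos_le_add fun ε hε => by simpa using (small ε hε).1) (buckDensity_nonneg S)
  have h1 : buckDensity Sᶜ = 1 := le_antisymm (buckDensity_le_one Sᶜ)
    (le_of_forall_pos_le_add fun ε hε => by linarith [(small ε hε).2])
  exact ⟨h0, by rw [BuckMeasurable, h0, h1, zero_add]⟩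

end BuckDensity

section Cycles

variable {α : Type*} {f : α → α} {x : α}

lemma iterate_eq_iterate_iff_modEq (hx : 0 < minimalPeriod f x) {m n : ℕ} :
    f^[m] x = f^[n] x ↔ m ≡ n [MOD minimalPeriod f x] := by
  rw [← iterate_mod_minimalPeriod_eq, ← iterate_mod_minimalPeriod_eq (n := n),
    iterate_eq_iterate_iff_of_lt_minimalPeriod (Nat.mod_lt _ hx) (Nat.mod_lt _ hx)]
  rfl

theorem minimalPeriod_eq_card {s : Finset α} (hf : Set.MapsTo f s s)
    (hreach : ∀ a ∈ s, ∀ b ∈ s, ∃ n, f^[n] a = b) (hx : x ∈ s) :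
    minimalPeriod f x = #s := by
  have hpos : 0 < minimalPeriod f x := by
    obtain ⟨n, hn⟩ := hreach (f x) (hf hx) x hx
    refine IsPeriodicPt.minimalPeriod_pos n.succ_pos ?_
    rwa [IsPeriodicPt, IsFixedPt, iterate_succ_apply]
  apply le_antisymm
  · simpa using card_le_card_of_injOn (s := range (minimalPeriod f x)) (t := s) (f^[·] x)
      (fun n _ => hf.iterate n hx) (by simpa using iterate_injOn_Iio_minimalPeriod)
  · classical
    calc #s ≤ #((range (minimalPeriod f x)).image (f^[·] x)) := card_le_card fun b hb => by
          obtain ⟨n, rfl⟩ := hreach x hx b hb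
          exact mem_image.2 ⟨n % minimalPeriod f x, mem_range.2 (Nat.mod_lt _ hpos),
            iterate_mod_minimalPeriod_eq⟩
      _ ≤ minimalPeriod f x := card_image_le.trans (card_range _).le

end Cycles

/-- For infinitely many pairwise coprime full cycles, the set of n matching all the
conditions simultaneously is Buck measurable of density 0. -/
theorem stmt6 (m : ℕ → ℕ) (h2 : ∀ i, 2 ≤ m i)
    (hcop : Pairwise fun i j => Nat.Coprime (m i) (m j))
    (π : ℕ → ℕ → ℕ)
    (hbij : ∀ i, Set.BijOn (π i) (Set.Iio (m i)) (Set.Iio (m i)))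
    (hcyc : ∀ i, ∀ r < m i, ∀ s < m i, ∃ n, (π i)^[n] r = s)
    (r s : ℕ → ℕ) (hr : ∀ i, r i < m i) (hs : ∀ i, s i < m i) :
    buckDensity {n : ℕ | ∀ i, (π i)^[n] (r i) = s i} = 0 ∧
    BuckMeasurable {n : ℕ | ∀ i, (π i)^[n] (r i) = s i} := by
  have hperiod : ∀ i, minimalPeriod (π i) (r i) = m i := fun i => by
    simpa using minimalPeriod_eq_card (s := range (m i)) (by simpa using (hbij i).mapsTo)
      (by simpa using hcyc i) (by simpa using hr i)
  have hinj : Injective m := fun i j hij => by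
    by_contra hne
    have : Nat.Coprime (m i) (m j) := hcop hne
    rw [hij, Nat.coprime_self] at this
    linarith [h2 j]
  refine buckDensity_eq_zero_and_buckMeasurable_of_subset_modEq fun K => ?_
  obtain ⟨i, hi⟩ := (hinj.nat_tendsto_atTop.eventually_gt_atTop K).exists
  obtain ⟨n₀, hn₀⟩ := hcyc i (r i) (hr i) (s i) (hs i)
  refine ⟨m i, hi, n₀, fun n hn => ?_⟩
  have hpos : 0 < minimalPeriod (π i) (r i) := (hperiod i).symm ▸ Nat.zero_lt_of_lt (hr i)
  exact hperiod i ▸ (iterate_eq_iterate_iff_modEq hpos).1 ((hn i).trans hn₀.symm)
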